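/- For 0 < b < a with a² > 2b², the quantity π² a² b/√(a²−b²) − (4π a² b⁴/(3(a²−b²)²)) · ₂F₁(2, 3/2; 5/2; b²/(b²−a²)) equals 2π b² (1 + (π a²)/(2b√(a²−b²)) − (a²/(b√(a²−b²))) arctan(b/√(a²−b²))). -/

import Mathlib

open Real

/-- Pochhammer symbol (rising factorial) on the reals. -/
noncomputable def poch (a : ℝ) (n : ℕ) : ℝ := (ascPochhammer ℝ n).eval a

/-- Gauss hypergeometric series `₂F₁(a, b; c; z)`. -/
noncomputable def twoF1 (a b c z : ℝ) : ℝ :=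
  ∑' n : ℕ, poch a n * poch b n / poch c n * z ^ n / (Nat.factorial n)


lemma poch_two (n : ℕ) : poch 2 n = (Nat.factorial (n+1) : ℝ) := by
  induction n with
  | zero => simp [poch]
  | succ n ih =>
    simp only [poch, ascPochhammer_succ_eval] at *
    rw [ih]
    push_cast [Nat.factorial_succ]
    ring

lemma poch_ratio (n : ℕ) : poch (3/2) n * (2*n+3) = 3 * poch (5/2) n := by
  induction n with
  | zero => norm_num [poch]
  | succ n ih =>
    simp only [poch, ascPochhammer_succ_eval] at *
    push_cast at *
    nlinarith [ih]

lemma term_eq (z : ℝ) (n : ℕ) :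
    poch 2 n * poch (3/2) n / poch (5/2) n * z ^ n / (Nat.factorial n)
      = (3/2) * z^n - (3/2) / (2*n+3) * z^n := by
  have h5 : (0:ℝ) < poch (5/2) n := ascPochhammer_pos n _ (by norm_num)
  have hf : (0:ℝ) < (Nat.factorial n : ℝ) := by exact_mod_cast n.factorial_pos
  have h3 : (0:ℝ) < 2*(n:ℝ)+3 := by positivity
  have key : poch (3/2) n = 3 * poch (5/2) n / (2*n+3) := by
    field_simp; linarith [poch_ratio n]
  have hfs : ((Nat.factorial (n+1) : ℝ)) = (n+1) * Nat.factorial n := by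
    push_cast [Nat.factorial_succ]; ring
  rw [poch_two, key, hfs]
  field_simp
  ring

lemma twoF1_val (t : ℝ) (ht0 : 0 < t) (ht1 : t < 1) :
    twoF1 2 (3/2) (5/2) (-t^2)
      = (3/2) * (1 - (-t^2))⁻¹ - (3/2) * ((t - Real.arctan t) / t^3) := by
  have hz : ‖(-t^2 : ℝ)‖ < 1 := by
    rw [Real.norm_eq_abs, abs_neg, abs_of_pos (by positivity)]
    nlinarith
  have hgeo : HasSum (fun n : ℕ => (3/2 : ℝ) * (-t^2)^n) ((3/2) * (1 - (-t^2))⁻¹) :=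
    (hasSum_geometric_of_norm_lt_one hz).mul_left _
  have ha : HasSum (fun n : ℕ => (-1)^n * t^(2*n+1)/(2*n+1 : ℕ)) (Real.arctan t) :=
    Real.hasSum_arctan (by rw [Real.norm_eq_abs, abs_of_pos ht0]; exact ht1)
  have ha1 : HasSum (fun n : ℕ => (-1)^(n+1) * t^(2*(n+1)+1)/(2*(n+1)+1 : ℕ))
      (Real.arctan t - ∑ i ∈ Finset.range 1, (-1)^i * t^(2*i+1)/(2*i+1 : ℕ)) :=
    (hasSum_nat_add_iff' 1).2 ha
  simp only [Finset.range_one, Finset.sum_singleton, pow_zero, one_mul, mul_zero, zero_add,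
    Nat.cast_one, pow_one, div_one] at ha1
  have ha2 := (ha1.mul_left (-(t^3)⁻¹)).mul_left (3/2 : ℝ)
  have hfun : ∀ n : ℕ, (3/2 : ℝ) * (-(t^3)⁻¹ * ((-1)^(n+1) * t^(2*(n+1)+1)/(2*(n+1)+1 : ℕ)))
      = (3/2) / (2*(n:ℝ)+3) * (-t^2)^n := by
    intro n
    have h3 : (0:ℝ) < 2*(n:ℝ)+3 := by positivity
    have hpow : t^(2*(n+1)+1) = t^(2*n) * t^3 := by ring
    have hneg : ((-t^2 : ℝ))^n = (-1)^n * t^(2*n) := by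
      rw [neg_pow, pow_mul]
    push_cast
    rw [hpow, hneg, pow_succ]
    field_simp
    ring
  have hT : HasSum (fun n : ℕ => (3/2 : ℝ) / (2*(n:ℝ)+3) * (-t^2)^n)
      ((3/2) * (-(t^3)⁻¹ * (Real.arctan t - t))) := by
    have := ha2
    simpa only [hfun] using this
  have hsum := hgeo.sub hT
  have : twoF1 2 (3/2) (5/2) (-t^2)
      = ∑' n : ℕ, ((3/2 : ℝ) * (-t^2)^n - (3/2) / (2*(n:ℝ)+3) * (-t^2)^n) := by
    rw [twoF1]
    exact tsum_congr fun n => term_eq (-t^2) n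
  rw [this, hsum.tsum_eq]
  have ht3 : t^3 ≠ 0 := by positivity
  field_simp
  ring

/-- For `0 < b < a` with `a² > 2b²`,
`π²a²b/√(a²−b²) − (4πa²b⁴/(3(a²−b²)²)) ₂F₁(2, 3/2; 5/2; b²/(b²−a²))
  = 2πb²(1 + πa²/(2b√(a²−b²)) − (a²/(b√(a²−b²))) arctan(b/√(a²−b²)))`. -/
theorem prolate_spheroid_large_ecc (a b : ℝ) (hb : 0 < b) (hba : b < a)
    (h2 : a ^ 2 > 2 * b ^ 2) :
    π ^ 2 * a ^ 2 * b / Real.sqrt (a ^ 2 - b ^ 2)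
        - (4 * π * a ^ 2 * b ^ 4 / (3 * (a ^ 2 - b ^ 2) ^ 2)) *
            twoF1 2 (3 / 2) (5 / 2) (b ^ 2 / (b ^ 2 - a ^ 2))
      = 2 * π * b ^ 2 * (1 + π * a ^ 2 / (2 * b * Real.sqrt (a ^ 2 - b ^ 2))
          - a ^ 2 / (b * Real.sqrt (a ^ 2 - b ^ 2)) *
              Real.arctan (b / Real.sqrt (a ^ 2 - b ^ 2))) := by
  have ha : 0 < a := lt_trans hb hba
  set s := Real.sqrt (a ^ 2 - b ^ 2) with hsdef
  have hs2 : s ^ 2 = a ^ 2 - b ^ 2 := Real.sq_sqrt (by nlinarith)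
  have hs : 0 < s := Real.sqrt_pos.2 (by nlinarith)
  have hbs : b < s := by nlinarith [hs, hs2]
  set t := b / s with htdef
  have ht0 : 0 < t := div_pos hb hs
  have ht1 : t < 1 := (div_lt_one hs).2 hbs
  have hzt : b ^ 2 / (b ^ 2 - a ^ 2) = -t ^ 2 := by
    have : b ^ 2 - a ^ 2 = -s ^ 2 := by rw [hs2]; ring
    rw [this, htdef, div_pow]
    field_simp
  rw [hzt, twoF1_val t ht0 ht1]
  have ha2 : a ^ 2 = s ^ 2 + b ^ 2 := by rw [hs2]; ring
  rw [htdef] at *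
  rw [ha2]
  have hsb : s ^ 2 + b ^ 2 ≠ 0 := by positivity
  have h1z : (1 - -(b/s)^2) = (s^2 + b^2)/s^2 := by field_simp; ring
  rw [h1z]
  field_simp
  ring
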